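/- arXiv:0911.4677 — 9 statements merged into one kernel-verified Lean document; each statement's English description precedes it below -/
import Mathlib

section
/- Let V be a linear subspace of ℝ^n such that V intersects the nonnegative orthant {x : x_i ≥ 0 for all i} only in 0. Then there exists a vector y in the orthogonal complement of V all of whose coordinates are strictly positive. -/
open RealInnerProductSpace

/-!
The standard simplex `Δ = {x | x ≥ 0, ∑ xᵢ = 1}` is compact, convex and, by hypothesis, disjoint
from `V`. Strict Hahn–Banach separation gives a functional `< u` on `V` and `> u` on `Δ`; being
bounded above on a subspace it vanishes there, so `u > 0`. Its Riesz representative `y` lies in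
`Vᗮ`, and `yᵢ = ⟪y, eᵢ⟫ > 0` because each basis vector `eᵢ` lies in `Δ`.
-/

theorem LinearMap.eq_zero_of_forall_mem_lt {𝕜 M : Type*} [Field 𝕜] [Preorder 𝕜]
    [AddCommGroup M] [Module 𝕜 M] (f : M →ₗ[𝕜] 𝕜) {V : Submodule 𝕜 M} {u : 𝕜}
    (hf : ∀ a ∈ V, f a < u) {a : M} (ha : a ∈ V) : f a = 0 := by
  by_contra hfa
  have := hf _ (V.smul_mem (u / f a) ha)
  rw [map_smul, smul_eq_mul, div_mul_cancel₀ u hfa] at this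
  exact this.false

theorem Submodule.exists_strongDual_eq_zero_and_pos_of_disjoint {E : Type*} [TopologicalSpace E]
    [AddCommGroup E] [Module ℝ E] [IsTopologicalAddGroup E] [ContinuousSMul ℝ E]
    [LocallyConvexSpace ℝ E] (V : Submodule ℝ E) (hV : IsClosed (V : Set E)) {t : Set E}
    (ht : Convex ℝ t) (ht' : IsCompact t) (hVt : Disjoint (V : Set E) t) :
    ∃ f : StrongDual ℝ E, (∀ a ∈ V, f a = 0) ∧ ∀ b ∈ t, 0 < f b := by
  obtain ⟨f, u, v, hfV, huv, hft⟩ := geometric_hahn_banach_closed_compact V.convex hV ht ht' hVt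
  have hu : 0 < u := by simpa using hfV 0 V.zero_mem
  exact ⟨f, fun a ha => (f : E →ₗ[ℝ] ℝ).eq_zero_of_forall_mem_lt hfV ha,
    fun b hb => hu.trans (huv.trans (hft b hb))⟩

theorem Submodule.exists_mem_orthogonal_inner_pos_of_disjoint {E : Type*}
    [NormedAddCommGroup E] [InnerProductSpace ℝ E] [CompleteSpace E] (V : Submodule ℝ E)
    (hV : IsClosed (V : Set E)) {t : Set E} (ht : Convex ℝ t) (ht' : IsCompact t)
    (hVt : Disjoint (V : Set E) t) : ∃ y ∈ Vᗮ, ∀ b ∈ t, 0 < ⟪y, b⟫ := by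
  obtain ⟨f, hfV, hft⟩ := V.exists_strongDual_eq_zero_and_pos_of_disjoint hV ht ht' hVt
  set y := (InnerProductSpace.toDual ℝ E).symm f
  have hy (x : E) : ⟪y, x⟫ = f x := InnerProductSpace.toDual_symm_apply
  refine ⟨y, fun a ha => ?_, fun b hb => (hy b).symm ▸ hft b hb⟩
  rw [real_inner_comm, hy, hfV a ha]

theorem EuclideanSpace.single_one_mem_preimage_stdSimplex {ι : Type*} [Fintype ι]
    [DecidableEq ι] (i : ι) :
    EuclideanSpace.single i (1 : ℝ) ∈ WithLp.ofLp ⁻¹' stdSimplex ℝ ι := by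
  simpa using single_mem_stdSimplex ℝ i

/-- If a linear subspace `V` of `ℝⁿ` meets the nonnegative orthant only in `0`,
then there is a vector in `Vᗮ` with all coordinates strictly positive. -/
theorem subspace_meets_orthant_trivially_exists_positive_orthogonal
    (n : ℕ) (V : Submodule ℝ (EuclideanSpace ℝ (Fin n)))
    (hV : ∀ x ∈ V, (∀ i, 0 ≤ x i) → x = 0) :
    ∃ y ∈ Vᗮ, ∀ i, 0 < y i := by
  set Δ : Set (EuclideanSpace ℝ (Fin n)) := WithLp.ofLp ⁻¹' stdSimplex ℝ (Fin n)
  have hΔ : Convex ℝ Δ :=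
    (convex_stdSimplex ℝ (Fin n)).linear_preimage (EuclideanSpace.equiv (Fin n) ℝ).toLinearMap
  have hΔ' : IsCompact Δ :=
    (EuclideanSpace.equiv (Fin n) ℝ).toHomeomorph.isCompact_preimage.2 (isCompact_stdSimplex ℝ _)
  have hVΔ : Disjoint (V : Set (EuclideanSpace ℝ (Fin n))) Δ := by
    refine Set.disjoint_left.2 fun x hxV ⟨hx, hsum⟩ => ?_
    simp [hV x hxV hx] at hsum
  obtain ⟨y, hyV, hyΔ⟩ :=
    V.exists_mem_orthogonal_inner_pos_of_disjoint V.closed_of_finiteDimensional hΔ hΔ' hVΔ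
  refine ⟨y, hyV, fun i => ?_⟩
  simpa [EuclideanSpace.inner_single_right] using
    hyΔ _ (EuclideanSpace.single_one_mem_preimage_stdSimplex i)
end

section
/- Let P_1, ..., P_k be k ≥ n+2 points in ℝ^n whose nonnegative span is all of ℝ^n (equivalently, 0 lies in the interior of their convex hull and they span ℝ^n), and such that no n of the P_i are contained in an (n-1)-dimensional subspace. Then there exist n+1 points among the P_i whose nonnegative span is also all of ℝ^n. -/
/-!
Writing `-∑ i, P i` as a nonnegative combination gives a strictly positive relation among the
`P i`, so `0` lies in their convex hull and, by Carathéodory's theorem, is a strictly positive combination of affinely independent points among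
them, hence of at most `n + 1` of them. As any `n` of the points are linearly independent, such a
relation involves at least `n + 1` points, so exactly `n + 1`, and these span `ℝⁿ`. Adding a large
multiple of the positive relation to any expansion of `v` in these points makes all coefficients
nonnegative.
-/

open Finset Function Module Submodule

section PositiveRelation

variable {𝕜 M ι : Type*} [Field 𝕜] [LinearOrder 𝕜] [IsStrictOrderedRing 𝕜]
  [AddCommGroup M] [Module 𝕜 M] [Fintype ι] {v : ι → M}

theorem zero_mem_convexHull_range_of_forall_eq_sum_nonneg [Nonempty ι]
    (hv : ∀ x, ∃ c : ι → 𝕜, (∀ i, 0 ≤ c i) ∧ x = ∑ i, c i • v i) :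
    (0 : M) ∈ convexHull 𝕜 (Set.range v) := by
  obtain ⟨c, hc, hsum⟩ := hv (-∑ i, v i)
  have hpos : ∀ i ∈ univ, 0 < c i + 1 := fun i _ => by linarith [hc i]
  have hrel : ∑ i, (c i + 1) • v i = 0 := by
    simp [add_smul, sum_add_distrib, ← hsum]
  have := univ.centerMass_mem_convexHull (z := v) (fun i hi => (hpos i hi).le)
    (sum_pos hpos univ_nonempty) (fun i _ => Set.mem_range_self i)
  simpa [Finset.centerMass, hrel] using this

theorem exists_nonneg_eq_sum_smul_of_mem_span {w : ι → 𝕜} (hw : ∀ i, 0 < w i)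
    (hrel : ∑ i, w i • v i = 0) {x : M} (hx : x ∈ span 𝕜 (Set.range v)) :
    ∃ c : ι → 𝕜, (∀ i, 0 ≤ c i) ∧ x = ∑ i, c i • v i := by
  obtain ⟨a, rfl⟩ := (mem_span_range_iff_exists_fun 𝕜).1 hx
  set t := ∑ i, |a i| / w i
  refine ⟨fun i => a i + t * w i, fun i => ?_, ?_⟩
  · have h : |a i| / w i ≤ t :=
      single_le_sum (fun j _ => div_nonneg (abs_nonneg _) (hw j).le) (mem_univ i)
    linarith [(div_le_iff₀ (hw i)).1 h, neg_abs_le (a i)]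
  · simp [add_smul, sum_add_distrib, mul_smul, ← smul_sum, hrel]

end PositiveRelation

section LinearIndependence

variable {R M ι : Type*} [Fintype ι] {v : ι → M} {n : ℕ}

theorem linearIndepOn_of_card_le [Semiring R] [AddCommMonoid M] [Module R M]
    (hv : ∀ s : Finset ι, s.card = n → LinearIndepOn R v s) (hn : n ≤ Fintype.card ι)
    {s : Finset ι} (hs : s.card ≤ n) : LinearIndepOn R v s := by
  obtain ⟨t, hst, -, ht⟩ := exists_subsuperset_card_eq (subset_univ s) hs (by simpa)
  exact (hv t ht).mono (by simpa)

theorem lt_card_of_sum_smul_eq_zero [Ring R] [AddCommGroup M] [Module R M]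
    (hv : ∀ s : Finset ι, s.card ≤ n → LinearIndepOn R v s) {w : ι → R}
    (hrel : ∑ i, w i • v i = 0) (hw : w ≠ 0) : n < Fintype.card ι := by
  by_contra! h
  have hli : LinearIndependent R v := linearIndepOn_univ_iff.1 (by simpa using hv univ (by simpa))
  exact hw (funext (Fintype.linearIndependent_iff.1 hli w hrel))

theorem span_range_eq_top_of_card_eq_finrank_succ [DivisionRing R] [AddCommGroup M] [Module R M]
    [FiniteDimensional R M] (hv : ∀ s : Finset ι, s.card ≤ finrank R M → LinearIndepOn R v s)
    (hcard : Fintype.card ι = finrank R M + 1) : span R (Set.range v) = ⊤ := by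
  classical
  obtain ⟨i⟩ : Nonempty ι := Fintype.card_pos_iff.1 (by omega)
  have hs : (univ.erase i).card = finrank R M := by simp [card_erase_of_mem, hcard]
  have htop := (hv _ hs.le).span_eq_top_of_card_eq_finrank' (by simpa using hs)
  exact top_unique <| htop.ge.trans <|
    span_mono (Set.range_subset_iff.2 fun j => Set.mem_range_self _)

end LinearIndependence

/-- If `k ≥ n+2` points in `ℝⁿ` have nonnegative span all of `ℝⁿ`, and no `n` of
them lie in an `(n-1)`-dimensional subspace (i.e. every `n` of them are linearly
independent), then some `n+1` of them already have nonnegative span all of `ℝⁿ`. -/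
theorem exists_spanning_subset_of_pos_span
    (n k : ℕ) (hk : n + 2 ≤ k) (P : Fin k → (Fin n → ℝ))
    (hspan : ∀ v : Fin n → ℝ, ∃ c : Fin k → ℝ,
      (∀ i, 0 ≤ c i) ∧ v = ∑ i, c i • P i)
    (hindep : ∀ s : Finset (Fin k), s.card = n →
      LinearIndependent ℝ (fun i : s => P i)) :
    ∃ s : Finset (Fin k), s.card = n + 1 ∧
      ∀ v : Fin n → ℝ, ∃ c : Fin k → ℝ,
        (∀ i, 0 ≤ c i) ∧ v = ∑ i ∈ s, c i • P i := by
  classical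
  have : Nonempty (Fin k) := ⟨⟨0, by omega⟩⟩
  obtain ⟨ι, _, z, w, hzP, hz, hw, hw1, hrel⟩ := eq_pos_convex_span_of_mem_convexHull
    (zero_mem_convexHull_range_of_forall_eq_sum_nonneg hspan)
  choose f hf using fun i => hzP (Set.mem_range_self i)
  obtain rfl : z = P ∘ f := funext fun i => (hf i).symm
  have hf_inj : Injective f := hz.injective.of_comp
  have hindep' (s : Finset ι) (hs : s.card ≤ n) : LinearIndepOn ℝ (P ∘ f) s := by
    have := linearIndepOn_of_card_le hindep (by simp only [Fintype.card_fin]; omega)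
      ((card_image_le (f := f)).trans hs)
    exact LinearIndepOn.comp_of_image (by simpa using this) hf_inj.injOn
  have hcard : Fintype.card ι = n + 1 := by
    refine le_antisymm ?_ (lt_card_of_sum_smul_eq_zero hindep' hrel fun h => by simp [h] at hw1)
    simpa using hz.card_le_finrank_succ.trans
      (by simpa using (vectorSpan ℝ (Set.range (P ∘ f))).finrank_le)
  have hspan' : span ℝ (Set.range (P ∘ f)) = ⊤ :=
    span_range_eq_top_of_card_eq_finrank_succ (by simpa using hindep') (by simpa using hcard)
  refine ⟨univ.map ⟨f, hf_inj⟩, by simp [hcard], fun v => ?_⟩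
  obtain ⟨c, hc, rfl⟩ :=
    exists_nonneg_eq_sum_smul_of_mem_span hw hrel (hspan' ▸ mem_top : v ∈ _)
  exact ⟨extend f c 0, extend_nonneg (f := f) (g := c) (e := 0) hc fun _ => le_rfl,
    by simp [hf_inj.extend_apply]⟩
end

section
/- Let (r_1, ..., r_g) be a basis of a totally real number field F of degree g over ℚ, with dual basis (s_1, ..., s_g) with respect to the trace pairing (i.e. Tr(r_i s_j) = δ_{ij}). If the basis is rational and weakly positive — meaning (r_i/s_i)/(r_j/s_j) ∈ ℚ and is totally positive for all i ≠ j — then it is positive, i.e. r_i/s_i is totally positive for all i. -/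
/-!
Put `t = rᵢ / sᵢ`. Rationality and weak positivity give `rⱼ / sⱼ = cⱼ t` with rational `cⱼ > 0`;
writing `t x = ∑ βⱼ rⱼ` then gives `x = ∑ cⱼ βⱼ sⱼ`, so `Tr (t x²) = ∑ cⱼ βⱼ² ≥ 0` for all
`x ∈ F`. Over `ℝ` this form becomes `∑_σ σ(t) σ(x)²`; the embedding matrix of a `ℚ`-basis is
invertible, so `(σ x)_σ` can approximate the indicator of any single embedding `τ`, forcing
`τ t ≥ 0`, and `τ t ≠ 0` since `t ≠ 0`.
-/

open Module

theorem trace_sum_smul_mul_sum_smul {K L ι : Type*} [CommRing K] [CommRing L] [Algebra K L]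
    [Fintype ι] [DecidableEq ι] {r s : ι → L}
    (hdual : ∀ i j, Algebra.trace K L (r i * s j) = if i = j then 1 else 0) (β γ : ι → K) :
    Algebra.trace K L ((∑ i, β i • r i) * ∑ j, γ j • s j) = ∑ i, β i * γ i := by
  simp [Finset.sum_mul_sum, map_sum, hdual, mul_comm]

theorem trace_mul_sq_nonneg_of_basis_eq_pos_smul_mul_dual {K L ι : Type*} [Field K]
    [LinearOrder K] [IsStrictOrderedRing K] [Field L] [Algebra K L] [Fintype ι] [DecidableEq ι]
    (b : Basis ι K L) {s : ι → L}
    (hdual : ∀ i j, Algebra.trace K L (b i * s j) = if i = j then 1 else 0)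
    {t : L} (ht : t ≠ 0) {c : ι → K} (hc_pos : ∀ j, 0 < c j) (hc : ∀ j, b j = c j • (t * s j))
    (x : L) : 0 ≤ Algebra.trace K L (t * x ^ 2) := by
  set β := b.repr (t * x)
  have htx : t * x = ∑ j, β j • b j := (b.sum_repr _).symm
  have hx : x = ∑ j, (c j * β j) • s j := by
    refine mul_left_cancel₀ ht (htx.trans ?_)
    simp [Finset.mul_sum, hc, smul_smul, mul_comm]
  calc 0 ≤ ∑ j, β j * (c j * β j) := by
        refine Finset.sum_nonneg fun j _ => ?_
        nlinarith [hc_pos j, mul_self_nonneg (β j)]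
    _ = Algebra.trace K L ((∑ j, β j • b j) * ∑ j, (c j * β j) • s j) :=
        (trace_sum_smul_mul_sum_smul hdual _ _).symm
    _ = Algebra.trace K L (t * x ^ 2) := by rw [← htx, ← hx, mul_assoc, sq]

section TotallyReal

variable {F : Type*} [Field F] [Algebra ℚ F] (htotreal : ∀ φ : F →+* ℂ, ∀ x : F, (φ x).im = 0)

noncomputable def realEmbedding (σ : F →ₐ[ℚ] ℂ) : F →ₐ[ℚ] ℝ where
  toFun x := (σ x).re
  map_one' := by simp
  map_mul' x y := by simpa [Complex.mul_re] using Or.inl (htotreal σ x)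
  map_zero' := by simp
  map_add' x y := by simp
  commutes' q := by simp

theorem ofReal_realEmbedding (σ : F →ₐ[ℚ] ℂ) (x : F) :
    (realEmbedding htotreal σ x : ℂ) = σ x :=
  Complex.ext rfl (htotreal σ x).symm

theorem algebraMap_trace_eq_sum_realEmbedding [FiniteDimensional ℚ F] (x : F) :
    algebraMap ℚ ℝ (Algebra.trace ℚ F x) = ∑ σ : F →ₐ[ℚ] ℂ, realEmbedding htotreal σ x := by
  apply Complex.ofReal_injective
  push_cast [ofReal_realEmbedding]
  rw [← trace_eq_sum_embeddings ℂ]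
  simp

open Classical in
theorem sum_realEmbedding_mul_eq_ite [FiniteDimensional ℚ F] {ι : Type*} [Fintype ι]
    [DecidableEq ι] (hcard : Fintype.card ι = finrank ℚ F) {r s : ι → F}
    (hdual : ∀ i j, Algebra.trace ℚ F (r i * s j) = if i = j then 1 else 0)
    (σ τ : F →ₐ[ℚ] ℂ) :
    ∑ j, realEmbedding htotreal τ (r j) * realEmbedding htotreal σ (s j) =
      if σ = τ then 1 else 0 := by
  let A : Matrix ι (F →ₐ[ℚ] ℂ) ℝ := .of fun j σ => realEmbedding htotreal σ (r j)
  let B : Matrix (F →ₐ[ℚ] ℂ) ι ℝ := .of fun σ k => realEmbedding htotreal σ (s k)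
  have hAB : A * B = 1 := by
    ext j k
    simp only [A, B, Matrix.mul_apply, Matrix.of_apply, Matrix.one_apply, ← map_mul,
      ← algebraMap_trace_eq_sum_realEmbedding, hdual]
    split_ifs <;> simp
  have hBA : B * A = 1 :=
    (Matrix.mul_eq_one_comm_of_card_eq _ _ _ (by rw [hcard, AlgHom.card])).mp hAB
  simpa [A, B, Matrix.mul_apply, Matrix.one_apply, mul_comm] using congr_fun₂ hBA σ τ

end TotallyReal

theorem re_nonneg_of_trace_mul_sq_nonneg {F : Type*} [Field F] [Algebra ℚ F]
    [FiniteDimensional ℚ F] (htotreal : ∀ φ : F →+* ℂ, ∀ x : F, (φ x).im = 0) {t : F}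
    (ht : ∀ x, 0 ≤ Algebra.trace ℚ F (t * x ^ 2)) (φ : F →+* ℂ) : 0 ≤ (φ t).re := by
  classical
  let b := finBasis ℚ F
  let s := (Algebra.traceForm ℚ F).dualBasis (traceForm_nondegenerate ℚ F) b
  have hdual (i j) : Algebra.trace ℚ F (b i * s j) = if i = j then 1 else 0 := by
    simpa [Algebra.traceForm_apply, mul_comm] using
      (Algebra.traceForm ℚ F).apply_dualBasis_left (traceForm_nondegenerate ℚ F) b j i
  let ρ := realEmbedding htotreal
  let Q : (Fin (finrank ℚ F) → ℝ) → ℝ := fun w => ∑ σ, ρ σ t * (∑ j, w j * ρ σ (s j)) ^ 2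
  have hQ_rat (a : Fin (finrank ℚ F) → ℚ) :
      Q (fun j => a j) = algebraMap ℚ ℝ (Algebra.trace ℚ F (t * (∑ j, a j • s j) ^ 2)) := by
    simp [Q, ρ, algebraMap_trace_eq_sum_realEmbedding htotreal, map_sum, Algebra.smul_def]
  have hQ_nonneg (w) : 0 ≤ Q w := by
    refine (DenseRange.piMap fun _ => Rat.denseRange_cast).induction_on w
      (isClosed_le continuous_const (by fun_prop)) fun a => ?_
    change 0 ≤ Q (fun j => (a j : ℝ))
    rw [hQ_rat, eq_ratCast]
    exact_mod_cast ht _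
  let τ := φ.toRatAlgHom
  -- `b` and `s` are dual, so the point `(τ (b j))ⱼ` kills every term of `Q` except the `τ`-term.
  have hQ_delta : Q (fun j => ρ τ (b j)) = ρ τ t := by
    simp [Q, ρ, sum_realEmbedding_mul_eq_ite htotreal (Fintype.card_fin _) hdual]
  exact (hQ_delta ▸ hQ_nonneg _ : 0 ≤ ρ τ t)

theorem exists_pos_rat_smul_of_weakly_positive {F ι : Type*} [Field F] [Algebra ℚ F]
    {u : ι → F} (i : ι) (hi : u i ≠ 0)
    (hrat : ∀ j, j ≠ i → ∃ q : ℚ, u j / u i = algebraMap ℚ F q) (φ : F →+* ℂ)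
    (hpos : ∀ j, j ≠ i → 0 < (φ (u j / u i)).re) :
    ∃ c : ι → ℚ, (∀ j, 0 < c j) ∧ ∀ j, u j = c j • u i := by
  have h (j) : ∃ q : ℚ, 0 < q ∧ u j = q • u i := by
    by_cases hji : j = i
    · exact ⟨1, one_pos, by rw [hji, one_smul]⟩
    obtain ⟨q, hq⟩ := hrat j hji
    refine ⟨q, ?_, ?_⟩
    · simpa [hq] using hpos j hji
    · rw [Algebra.smul_def, ← hq, div_mul_cancel₀ _ hi]
  choose c hc_pos hc using h
  exact ⟨c, hc_pos, hc⟩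

theorem weakly_positive_rational_basis_is_positive_general
    (F : Type*) [Field F] [Algebra ℚ F] [FiniteDimensional ℚ F] (g : ℕ)
    (htotreal : ∀ φ : F →+* ℂ, ∀ x : F, (φ x).im = 0)
    (b : Basis (Fin g) ℚ F) (r s : Fin g → F) (hr : ∀ i, r i = b i)
    (hdual : ∀ i j, Algebra.trace ℚ F (r i * s j) = if i = j then 1 else 0)
    (hrat : ∀ i j, i ≠ j → ∃ q : ℚ, (r i / s i) / (r j / s j) = algebraMap ℚ F q)
    (hweakpos : ∀ i j, i ≠ j → ∀ φ : F →+* ℂ,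
      0 < (φ ((r i / s i) / (r j / s j))).re) :
    ∀ i, ∀ φ : F →+* ℂ, 0 < (φ (r i / s i)).re := by
  intro i φ
  have hrs (j) : r j * s j ≠ 0 := fun h => by simpa [h] using hdual j j
  have hs (j) : s j ≠ 0 := right_ne_zero_of_mul (hrs j)
  have ht : r i / s i ≠ 0 := div_ne_zero (left_ne_zero_of_mul (hrs i)) (hs i)
  obtain ⟨c, hc_pos, hc⟩ :=
    exists_pos_rat_smul_of_weakly_positive i ht (hrat · i) φ (hweakpos · i · φ)
  have hb (j) : b j = c j • (r i / s i * s j) := by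
    rw [← hr, ← smul_mul_assoc, ← hc, div_mul_cancel₀ _ (hs j)]
  have htrace := trace_mul_sq_nonneg_of_basis_eq_pos_smul_mul_dual b
    (by simpa [hr] using hdual) ht hc_pos hb
  have hnonneg := re_nonneg_of_trace_mul_sq_nonneg htotreal htrace φ
  refine hnonneg.lt_of_ne fun h => (map_ne_zero φ).mpr ht ?_
  exact Complex.ext h.symm (htotreal φ _)

/-- A rational and weakly positive basis of a totally real number field is
positive: if `(rᵢ)` is a `ℚ`-basis of `F` with trace-dual basis `(sᵢ)` such that
`(rᵢ/sᵢ)/(rⱼ/sⱼ)` is rational and totally positive for all `i ≠ j`, then each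
`rᵢ/sᵢ` is totally positive. -/
theorem weakly_positive_rational_basis_is_positive
    (F : Type*) [Field F] [Algebra ℚ F] [FiniteDimensional ℚ F] (g : ℕ)
    (hdeg : Module.finrank ℚ F = g)
    (htotreal : ∀ φ : F →+* ℂ, ∀ x : F, (φ x).im = 0)
    (b : Basis (Fin g) ℚ F) (r s : Fin g → F) (hr : ∀ i, r i = b i)
    (hdual : ∀ i j, Algebra.trace ℚ F (r i * s j) = if i = j then 1 else 0)
    (hrat : ∀ i j, i ≠ j → ∃ q : ℚ, (r i / s i) / (r j / s j) = algebraMap ℚ F q)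
    (hweakpos : ∀ i j, i ≠ j → ∀ φ : F →+* ℂ,
      0 < (φ ((r i / s i) / (r j / s j))).re) :
    ∀ i, ∀ φ : F →+* ℂ, 0 < (φ (r i / s i)).re :=
  weakly_positive_rational_basis_is_positive_general F g htotreal b r s hr hdual hrat hweakpos
end

section
/- Let F be a cubic number field with minimal polynomial relation: α has minimal polynomial aX³ + bX² + cX + d ∈ ℤ[X]. Let I_α = ℤ·1 + ℤ·α + ℤ·α² and R = ℤ·1 + ℤ·(aα) + ℤ·(aα² + bα). Then R · I_α ⊆ I_α, i.e. every element of R multiplies I_α into itself. -/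
/-! The relation rewrites `aα³` as `-(bα² + cα + d)`, so each product of a generator of `R` with
one of `1, α, α²` is an integral combination of `1, α, α²`; bilinearity does the rest. -/

open Polynomial Module

section CubicRelation

variable {A : Type*} [CommRing A] (α : A)

theorem mem_span_one_self_sq_of_eq {x : A} (p q r : ℤ) (h : x = p * α ^ 2 + q * α + r) :
    x ∈ Submodule.span ℤ ({1, α, α ^ 2} : Set A) := by
  have h1 : (1 : A) ∈ Submodule.span ℤ ({1, α, α ^ 2} : Set A) := Submodule.subset_span (by simp)
  have hα : α ∈ Submodule.span ℤ ({1, α, α ^ 2} : Set A) := Submodule.subset_span (by simp)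
  have hα2 : α ^ 2 ∈ Submodule.span ℤ ({1, α, α ^ 2} : Set A) := Submodule.subset_span (by simp)
  rw [h, ← zsmul_eq_mul, ← zsmul_eq_mul, ← zsmul_one]
  exact add_mem (add_mem (Submodule.smul_mem _ p hα2) (Submodule.smul_mem _ q hα))
    (Submodule.smul_mem _ r h1)

variable {α} {a b c d : ℤ}

theorem mul_mem_span_one_self_sq_of_cubic
    (hrel : (a : A) * α ^ 3 + (b : A) * α ^ 2 + (c : A) * α + (d : A) = 0) {s t : A}
    (hs : s ∈ ({1, (a : A) * α, (a : A) * α ^ 2 + (b : A) * α} : Set A))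
    (ht : t ∈ ({1, α, α ^ 2} : Set A)) :
    s * t ∈ Submodule.span ℤ ({1, α, α ^ 2} : Set A) := by
  rcases hs with rfl | rfl | rfl <;> rcases ht with ht | ht | ht <;> subst t
  · exact mem_span_one_self_sq_of_eq α 0 0 1 (by push_cast; ring)
  · exact mem_span_one_self_sq_of_eq α 0 1 0 (by push_cast; ring)
  · exact mem_span_one_self_sq_of_eq α 1 0 0 (by push_cast; ring)
  · exact mem_span_one_self_sq_of_eq α 0 a 0 (by ring)
  · exact mem_span_one_self_sq_of_eq α a 0 0 (by push_cast; ring)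
  · exact mem_span_one_self_sq_of_eq α (-b) (-c) (-d) (by push_cast; linear_combination hrel)
  · exact mem_span_one_self_sq_of_eq α a b 0 (by push_cast; ring)
  · exact mem_span_one_self_sq_of_eq α 0 (-c) (-d) (by push_cast; linear_combination hrel)
  · exact mem_span_one_self_sq_of_eq α (-c) (-d) 0 (by push_cast; linear_combination α * hrel)

end CubicRelation

theorem coefficient_ring_multiplies_lattice_general
    (F : Type*) [Field F]
    (α : F) (a b c d : ℤ)
    (hrel : (a : F) * α ^ 3 + (b : F) * α ^ 2 + (c : F) * α + (d : F) = 0) :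
    ∀ x ∈ Submodule.span ℤ ({1, (a : F) * α, (a : F) * α ^ 2 + (b : F) * α} : Set F),
      ∀ y ∈ Submodule.span ℤ ({1, α, α ^ 2} : Set F),
        x * y ∈ Submodule.span ℤ ({1, α, α ^ 2} : Set F) := by
  intro x hx y hy
  have hxy := Submodule.mul_mem_mul hx hy
  rw [Submodule.span_mul_span] at hxy
  refine Submodule.span_le.mpr ?_ hxy
  rintro _ ⟨s, hs, t, ht, rfl⟩
  exact mul_mem_span_one_self_sq_of_cubic hrel hs ht

/-- If `α` generates a cubic field with minimal polynomial
`aX³ + bX² + cX + d ∈ ℤ[X]`, and `I_α = ⟨1, α, α²⟩_ℤ`,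
`R = ⟨1, aα, aα² + bα⟩_ℤ`, then `R · I_α ⊆ I_α`. -/
theorem coefficient_ring_multiplies_lattice
    (F : Type*) [Field F] [Algebra ℚ F] (hdeg : Module.finrank ℚ F = 3)
    (α : F) (a b c d : ℤ)
    (hrel : (a : F) * α ^ 3 + (b : F) * α ^ 2 + (c : F) * α + (d : F) = 0)
    (hirr : Irreducible (C (a : ℚ) * X ^ 3 + C (b : ℚ) * X ^ 2
      + C (c : ℚ) * X + C (d : ℚ))) :
    ∀ x ∈ Submodule.span ℤ ({1, (a : F) * α, (a : F) * α ^ 2 + (b : F) * α} : Set F),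
      ∀ y ∈ Submodule.span ℤ ({1, α, α ^ 2} : Set F),
        x * y ∈ Submodule.span ℤ ({1, α, α ^ 2} : Set F) :=
  coefficient_ring_multiplies_lattice_general F α a b c d hrel
end

section
/- Let F be a totally real cubic field, (r_1, r_2, r_3) a ℚ-basis of F with dual basis (s_1, s_2, s_3) under the trace pairing, satisfying the rationality condition. Then Σ_{i=1}^{3} (N(r_i) · s_i / r_i) · (1/r_i) = 0, where N is the norm from F to ℚ. -/
open Module

/-!
Write `σ₀, σ₁, σ₂` for the complex embeddings of `F`. Trace duality says that the matrices
`(σ(rᵢ))` and `(σ(sᵢ))` are inverse to each other up to transposition, so `∑ᵢ σ(sᵢ) τ(rᵢ) = 0`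
for `σ ≠ τ`. Rationality means `sᵢ = cᵢ t rᵢ` with `cᵢ ∈ ℚ` and one `t ∈ F`, which turns this
into `∑ᵢ cᵢ σ₁(rᵢ) σ₂(rᵢ) = 0`. The sum in question is `t ∑ᵢ cᵢ N(rᵢ)/rᵢ`, and `σ₀` maps
`N(rᵢ)/rᵢ` to `σ₁(rᵢ) σ₂(rᵢ)`.
-/

theorem exists_eq_smul_mul_of_div_div_eq_algebraMap {K F ι : Type*} [Field K] [Field F]
    [Algebra K F] {r s : ι → F} (hr : ∀ i, r i ≠ 0) (hs : ∀ i, s i ≠ 0)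
    (hrat : ∀ i j, i ≠ j → ∃ q : K, (r i / s i) / (r j / s j) = algebraMap K F q) (i₀ : ι) :
    ∃ c : ι → K, ∀ i, s i = c i • (s i₀ / r i₀ * r i) := by
  suffices ∀ i, ∃ c : K, s i = c • (s i₀ / r i₀ * r i) from ⟨_, fun i => (this i).choose_spec⟩
  intro i
  by_cases hi : i = i₀
  · subst hi
    exact ⟨1, by rw [one_smul]; field_simp [hr i]⟩
  obtain ⟨q, hq⟩ := hrat i i₀ hi
  refine ⟨q⁻¹, ?_⟩
  rw [Algebra.smul_def, map_inv₀, ← hq]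
  field_simp [hr i, hs i, hr i₀, hs i₀]

section Embeddings

variable {K F A ι : Type*} [Field K] [Field F] [Field A] [Algebra K F] [Algebra K A]
  [FiniteDimensional K F] [Algebra.IsSeparable K F] [IsAlgClosed A] [Fintype ι] [DecidableEq ι]

theorem sum_embedding_mul_embedding_eq_zero_of_trace_dual {r s : ι → F}
    (hcard : Fintype.card ι = finrank K F)
    (hdual : ∀ i j, Algebra.trace K F (r i * s j) = if i = j then 1 else 0)
    {σ τ : F →ₐ[K] A} (hστ : σ ≠ τ) : ∑ i, σ (s i) * τ (r i) = 0 := by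
  classical
  let R : Matrix ι (F →ₐ[K] A) A := .of fun i σ => σ (r i)
  let S : Matrix (F →ₐ[K] A) ι A := .of fun σ i => σ (s i)
  have hRS : R * S = 1 := by
    ext i j
    have h := congrArg (algebraMap K A) (hdual i j)
    rw [trace_eq_sum_embeddings] at h
    simpa [R, S, Matrix.mul_apply, Matrix.one_apply, apply_ite (algebraMap K A), mul_comm] using h
  have hSR := (Matrix.mul_eq_one_comm_of_card_eq _ _ _ (by rw [hcard, AlgHom.card])).mp hRS
  simpa [R, S, Matrix.mul_apply, Matrix.one_apply_ne hστ] using congrFun (congrFun hSR σ) τ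

theorem sum_smul_embedding_mul_embedding_eq_zero {r s : ι → F}
    (hcard : Fintype.card ι = finrank K F)
    (hdual : ∀ i j, Algebra.trace K F (r i * s j) = if i = j then 1 else 0)
    {c : ι → K} {t : F} (ht : t ≠ 0) (hs : ∀ i, s i = c i • (t * r i))
    {σ τ : F →ₐ[K] A} (hστ : σ ≠ τ) : ∑ i, algebraMap K A (c i) * σ (r i) * τ (r i) = 0 := by
  have hσt : σ t ≠ 0 := (map_ne_zero σ).mpr ht
  refine (mul_eq_zero.mp ?_).resolve_left hσt
  rw [Finset.mul_sum, ← sum_embedding_mul_embedding_eq_zero_of_trace_dual hcard hdual hστ]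
  refine Finset.sum_congr rfl fun i _ => ?_
  rw [hs i, map_smul, map_mul, Algebra.smul_def]
  ring

theorem embedding_zero_norm_div_self (e : Fin 3 ≃ (F →ₐ[K] A)) {x : F} (hx : x ≠ 0) :
    e 0 (algebraMap K F (Algebra.norm K x) / x) = e 1 x * e 2 x := by
  rw [map_div₀, AlgHom.commutes, Algebra.norm_eq_prod_embeddings,
    ← e.prod_comp (fun σ => σ x), Fin.prod_univ_three]
  field_simp [(map_ne_zero (e 0)).mpr hx]

end Embeddings

theorem norm_dual_sum_vanishes_general
    (F : Type*) [Field F] [Algebra ℚ F] [FiniteDimensional ℚ F]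
    (hdeg : Module.finrank ℚ F = 3)
    (r s : Fin 3 → F)
    (hdual : ∀ i j, Algebra.trace ℚ F (r i * s j) = if i = j then 1 else 0)
    (hrat : ∀ i j, i ≠ j → ∃ q : ℚ, (r i / s i) / (r j / s j) = algebraMap ℚ F q) :
    ∑ i, algebraMap ℚ F (Algebra.norm ℚ (r i)) * (s i / r i) * (1 / r i) = 0 := by
  have hrs : ∀ i, r i * s i ≠ 0 := fun i h => by simpa [h] using hdual i i
  have hr : ∀ i, r i ≠ 0 := fun i => left_ne_zero_of_mul (hrs i)
  have hs : ∀ i, s i ≠ 0 := fun i => right_ne_zero_of_mul (hrs i)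
  obtain ⟨c, hc⟩ := exists_eq_smul_mul_of_div_div_eq_algebraMap hr hs hrat 0
  have ht : s 0 / r 0 ≠ 0 := div_ne_zero (hs 0) (hr 0)
  let e : Fin 3 ≃ (F →ₐ[ℚ] ℂ) := (Fintype.equivFinOfCardEq (by rw [AlgHom.card, hdeg])).symm
  have hcard : Fintype.card (Fin 3) = finrank ℚ F := by rw [hdeg, Fintype.card_fin]
  have key : ∑ i, c i • (algebraMap ℚ F (Algebra.norm ℚ (r i)) / r i) = 0 := by
    refine (map_eq_zero_iff (e 0) (e 0).injective).mp ?_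
    rw [map_sum, ← sum_smul_embedding_mul_embedding_eq_zero hcard hdual ht hc
      (e.injective.ne (by decide : (1 : Fin 3) ≠ 2))]
    refine Finset.sum_congr rfl fun i _ => ?_
    rw [map_smul, embedding_zero_norm_div_self e (hr i), Algebra.smul_def, mul_assoc]
  calc ∑ i, algebraMap ℚ F (Algebra.norm ℚ (r i)) * (s i / r i) * (1 / r i)
      = s 0 / r 0 * ∑ i, c i • (algebraMap ℚ F (Algebra.norm ℚ (r i)) / r i) := by
        rw [Finset.mul_sum]
        refine Finset.sum_congr rfl fun i _ => ?_
        rw [hc i, Algebra.smul_def, Algebra.smul_def]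
        field_simp [hr i]
    _ = 0 := by rw [key, mul_zero]

/-- For a rational basis `(r₁,r₂,r₃)` of a totally real cubic field with
trace-dual basis `(s₁,s₂,s₃)`, one has `Σᵢ (N(rᵢ)·sᵢ/rᵢ)·(1/rᵢ) = 0`. -/
theorem norm_dual_sum_vanishes
    (F : Type*) [Field F] [Algebra ℚ F] [FiniteDimensional ℚ F]
    (hdeg : Module.finrank ℚ F = 3)
    (htotreal : ∀ φ : F →+* ℂ, ∀ x : F, (φ x).im = 0)
    (b : Basis (Fin 3) ℚ F) (r s : Fin 3 → F) (hr : ∀ i, r i = b i)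
    (hdual : ∀ i j, Algebra.trace ℚ F (r i * s j) = if i = j then 1 else 0)
    (hrat : ∀ i j, i ≠ j → ∃ q : ℚ, (r i / s i) / (r j / s j) = algebraMap ℚ F q) :
    ∑ i, algebraMap ℚ F (Algebra.norm ℚ (r i)) * (s i / r i) * (1 / r i) = 0 :=
  norm_dual_sum_vanishes_general F hdeg r s hdual hrat
end

section
/- Let T = 𝔾_m^{k+ℓ} sit inside ℂ^k × (ℂ*)^ℓ, let L be a subgroup of ℤ^k ⊕ ℤ^ℓ with torsion-free quotient, and φ : L → ℂ* a homomorphism. Let T_{L,φ} ⊂ T be the subvariety cut out by the monomial equations z^a w^b = φ(a,b) for (a,b) ∈ L, and let Δ = {0} × (ℂ*)^ℓ. Let C = {(a,b) : a_i ≥ 0 for all i} and N = {0} ⊕ ℤ^ℓ. Then the closure of T_{L,φ} in ℂ^k × (ℂ*)^ℓ meets Δ if and only if L ∩ C ⊆ N. -/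
/-!
If `v = (a, b) ∈ L` has `a ≥ 0`, the monomial `z^a w^b` is continuous on `ℂᵏ × (ℂ*)ˡ` and equals
the nonzero constant `φ v` on `T_{L,φ}`, so it cannot vanish at a point of the closure; at a
point with `z_i = 0` it does vanish unless `a_i = 0`.

Conversely, if `L ∩ C ⊆ N`, Stiemke's transposition theorem (a consequence of Farkas'
alternative, applied over `ℚ` and then cleared of denominators) yields `n ∈ ℤᵏ` with positive
entries orthogonal to the first components of `L`. The one-parameter subgroup
`s ↦ (s^n z, w)` then preserves `T_{L,φ}` and carries any of its points into `Δ` as `s → 0`.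
-/

open Set

/-- The translated subtorus of `(ℂ*)^{k+ℓ}` cut out by the monomial equations
`z^a w^b = φ(a,b)` for `(a,b) ∈ L`. -/
def torusVar (k l : ℕ) (L : AddSubgroup ((Fin k → ℤ) × (Fin l → ℤ)))
    (φ : L → ℂˣ) : Set ((Fin k → ℂ) × (Fin l → ℂ)) :=
  {p | (∀ i, p.1 i ≠ 0) ∧ (∀ j, p.2 j ≠ 0) ∧
    ∀ v : L, (∏ i, p.1 i ^ ((v : (Fin k → ℤ) × (Fin l → ℤ)).1 i)) *
      (∏ j, p.2 j ^ ((v : (Fin k → ℤ) × (Fin l → ℤ)).2 j)) = (φ v : ℂ)}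

open Finset
open scoped Matrix

section Farkas

variable {𝕜 V ι : Type*} [Field 𝕜] [LinearOrder 𝕜] [IsStrictOrderedRing 𝕜]
  [AddCommGroup V] [Module 𝕜 V]

theorem farkas_alternative (s : Finset ι) (w : ι → V) (b : V) :
    (∃ μ : ι → 𝕜, (∀ j, 0 ≤ μ j) ∧ ∑ j ∈ s, μ j • w j = b) ∨
      ∃ f : Module.Dual 𝕜 V, (∀ j ∈ s, 0 ≤ f (w j)) ∧ f b < 0 := by
  classical
  induction s using Finset.cons_induction generalizing w b with
  | empty =>
    by_cases hb : b = 0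
    · exact .inl ⟨0, fun _ => le_rfl, by simp [hb]⟩
    obtain ⟨f, hf⟩ : ∃ f : Module.Dual 𝕜 V, f b ≠ 0 := by
      by_contra! h
      exact hb ((Module.forall_dual_apply_eq_zero_iff 𝕜 b).mp h)
    rcases hf.lt_or_gt with hf | hf
    · exact .inr ⟨f, by simp, hf⟩
    · exact .inr ⟨-f, by simp, by simpa using hf⟩
  | cons a s ha ih =>
    rcases ih w b with ⟨μ, hμ, hsum⟩ | ⟨f, hf, hfb⟩
    · refine .inl ⟨Function.update μ a 0, fun j => ?_, ?_⟩
      · rcases eq_or_ne j a with rfl | hj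
        · simp
        · simpa [hj] using hμ j
      · rw [sum_cons, Function.update_self, zero_smul, zero_add,
          sum_congr rfl fun j hj => by rw [Function.update_of_ne (ne_of_mem_of_not_mem hj ha)],
          hsum]
    by_cases hfa : 0 ≤ f (w a)
    · refine .inr ⟨f, fun j hj => ?_, hfb⟩
      rcases mem_cons.mp hj with rfl | hj
      exacts [hfa, hf j hj]
    push Not at hfa
    set c := f (w a)
    -- project along `w a` onto `ker f` and recurse on the projected family
    set P : V →ₗ[𝕜] V := LinearMap.id - (c⁻¹ • f).smulRight (w a) with hP
    have hPx : ∀ x, P x = x - (c⁻¹ * f x) • w a := fun x => by simp [hP]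
    rcases ih (P ∘ w) (P b) with ⟨μ, hμ, hsum⟩ | ⟨g, hg, hgb⟩
    · set y := ∑ j ∈ s, μ j • w j
      have hy : 0 ≤ f y := by
        simp only [y, map_sum, map_smul, smul_eq_mul]
        exact sum_nonneg fun j hj => mul_nonneg (hμ j) (hf j hj)
      have hb : b = y + (c⁻¹ * (f b - f y)) • w a := by
        have : P y = P b := by simpa [y, map_sum] using hsum
        rw [hPx, hPx] at this
        rw [mul_sub, sub_smul]
        linear_combination (norm := module) -this
      refine .inl ⟨Function.update μ a (c⁻¹ * (f b - f y)), fun j => ?_, ?_⟩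
      · rcases eq_or_ne j a with rfl | hj
        · simpa using mul_nonneg_of_nonpos_of_nonpos (inv_lt_zero.mpr hfa).le (by linarith)
        · simpa [hj] using hμ j
      · rw [sum_cons, Function.update_self, add_comm,
          sum_congr rfl fun j hj => by rw [Function.update_of_ne (ne_of_mem_of_not_mem hj ha)]]
        exact hb.symm
    · refine .inr ⟨g ∘ₗ P, fun j hj => ?_, hgb⟩
      rcases mem_cons.mp hj with rfl | hj
      · simp [hPx, c, hfa.ne]
      · exact hg j hj

end Farkas

theorem Submodule.exists_pos_dotProduct_eq_zero {𝕜 ι : Type*} [Field 𝕜] [LinearOrder 𝕜]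
    [IsStrictOrderedRing 𝕜] [Fintype ι] (W : Submodule 𝕜 (ι → 𝕜))
    (hW : ∀ x ∈ W, 0 ≤ x → x = 0) :
    ∃ u : ι → 𝕜, (∀ i, 0 < u i) ∧ ∀ x ∈ W, u ⬝ᵥ x = 0 := by
  let e (i : ι) : Module.Dual 𝕜 W := LinearMap.proj i ∘ₗ W.subtype
  have key (i₀ : ι) : ∃ μ : ι → 𝕜, (∀ i, 0 ≤ μ i) ∧ ∑ i, μ i • e i = -e i₀ := by
    refine (farkas_alternative univ e (-e i₀)).resolve_right ?_
    rintro ⟨F, hF, hFi₀⟩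
    set x := (Module.evalEquiv 𝕜 W).symm F
    have hx (i : ι) : (x : ι → 𝕜) i = F (e i) := Module.apply_evalEquiv_symm_apply 𝕜 W (e i) F
    have hx0 := hW x x.2 fun i => (hx i).symm ▸ hF i (mem_univ i)
    have : F (e i₀) = 0 := by rw [← hx, hx0]; rfl
    simp [this] at hFi₀
  choose μ hμ hsum using key
  refine ⟨fun i => ∑ i₀, μ i₀ i + 1, fun i => ?_, fun x hx => ?_⟩
  · have : 0 ≤ ∑ i₀, μ i₀ i := sum_nonneg fun i₀ _ => hμ i₀ i
    linarith
  · have hrow (i₀ : ι) : ∑ i, μ i₀ i * x i = -x i₀ := by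
      simpa [e] using LinearMap.congr_fun (hsum i₀) ⟨x, hx⟩
    simp only [dotProduct, add_mul, one_mul, sum_mul, sum_add_distrib]
    rw [sum_comm]
    simp [hrow]

namespace AddSubgroup

variable {ι : Type*} (M : AddSubgroup (ι → ℤ))

theorem eq_zero_of_nonneg_of_mem_span_rat (hM : ∀ a ∈ M, 0 ≤ a → a = 0) {x : ι → ℚ}
    (hx : x ∈ Submodule.span ℚ ((Int.castAddHom ℚ).compLeft ι '' M)) (hx0 : 0 ≤ x) :
    x = 0 := by
  obtain ⟨⟨t, ht⟩, htx⟩ :=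
    multiple_mem_span_of_mem_localization_span (nonZeroDivisors ℤ) ℚ _ x hx
  have hspan : Submodule.span ℤ ((Int.castAddHom ℚ).compLeft ι '' M) ≤
      (M.map ((Int.castAddHom ℚ).compLeft ι)).toIntSubmodule :=
    Submodule.span_le.mpr fun y hy => hy
  obtain ⟨a, haM, hax⟩ := hspan htx
  have hta : (Int.castAddHom ℚ).compLeft ι (t • a) = ((t : ℚ) * t) • x := by
    rw [map_zsmul, hax, Submonoid.smul_def, ← Int.cast_smul_eq_zsmul ℚ,
      ← Int.cast_smul_eq_zsmul ℚ, smul_smul]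
  have ht0 : (t : ℚ) ≠ 0 := by exact_mod_cast nonZeroDivisors.ne_zero ht
  have hta0 : t • a = 0 := by
    refine hM _ (zsmul_mem haM t) fun i => ?_
    have h : (0 : ι → ℚ) ≤ (Int.castAddHom ℚ).compLeft ι (t • a) :=
      hta ▸ smul_nonneg (mul_self_nonneg _) hx0
    exact Int.cast_nonneg_iff.mp (h i)
  rw [hta0, map_zero, eq_comm, smul_eq_zero] at hta
  exact hta.resolve_left (mul_ne_zero ht0 ht0)

theorem exists_pos_dotProduct_eq_zero [Fintype ι] (hM : ∀ a ∈ M, 0 ≤ a → a = 0) :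
    ∃ n : ι → ℤ, (∀ i, 0 < n i) ∧ ∀ a ∈ M, n ⬝ᵥ a = 0 := by
  obtain ⟨u, hu, hperp⟩ := Submodule.exists_pos_dotProduct_eq_zero _
    fun x hx hx0 => M.eq_zero_of_nonneg_of_mem_span_rat hM hx hx0
  obtain ⟨⟨b, hb⟩, hbu⟩ := IsLocalization.exist_integer_multiples_of_finite (nonZeroDivisors ℤ) u
  choose m hm using hbu
  replace hm (i : ι) : (m i : ℚ) = b * u i := hm i
  have hb0 : (b : ℚ) ≠ 0 := by exact_mod_cast nonZeroDivisors.ne_zero hb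
  refine ⟨fun i => b * m i, fun i => ?_, fun a ha => ?_⟩
  · have : (0 : ℚ) < b * m i := by
      rw [hm, ← mul_assoc]
      exact mul_pos (mul_self_pos.mpr hb0) (hu i)
    exact_mod_cast this
  · have hua : u ⬝ᵥ (fun i => (a i : ℚ)) = 0 := hperp _ (Submodule.subset_span ⟨a, ha, rfl⟩)
    have : (((fun i => b * m i) ⬝ᵥ a : ℤ) : ℚ) = b * b * (u ⬝ᵥ fun i => (a i : ℚ)) := by
      simp only [dotProduct, Int.cast_sum, Int.cast_mul, hm, mul_sum]
      exact sum_congr rfl fun i _ => by ring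
    rw [hua, mul_zero] at this
    exact_mod_cast this

end AddSubgroup

section Monomials

variable {ι G₀ : Type*} [CommGroupWithZero G₀]

theorem zpow_sum₀ {a : G₀} (ha : a ≠ 0) (s : Finset ι) (f : ι → ℤ) :
    a ^ (∑ i ∈ s, f i) = ∏ i ∈ s, a ^ f i := by
  induction s using Finset.cons_induction with
  | empty => simp
  | cons i s hi ih => rw [sum_cons, prod_cons, zpow_add₀ ha, ih]

theorem prod_zpow_mul_zpow [Fintype ι] {s : G₀} (hs : s ≠ 0) (n a : ι → ℤ) (z : ι → G₀) :
    ∏ i, (s ^ n i * z i) ^ a i = s ^ (n ⬝ᵥ a) * ∏ i, z i ^ a i := by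
  simp only [mul_zpow, prod_mul_distrib, ← _root_.zpow_mul, dotProduct, zpow_sum₀ hs]

theorem continuousAt_prod_zpow [Fintype ι] [TopologicalSpace G₀] [ContinuousInv₀ G₀]
    [ContinuousMul G₀] {a : ι → ℤ} {z : ι → G₀} (h : ∀ i, z i ≠ 0 ∨ 0 ≤ a i) :
    ContinuousAt (fun z : ι → G₀ => ∏ i, z i ^ a i) z :=
  tendsto_finsetProd _ fun i _ => (continuous_apply i).continuousAt.zpow₀ (a i) (h i)

end Monomials

section TorusVar

variable {k l : ℕ} {L : AddSubgroup ((Fin k → ℤ) × (Fin l → ℤ))} {φ : L → ℂˣ}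

theorem eq_zero_of_mem_closure_torusVar {p : (Fin k → ℂ) × (Fin l → ℂ)}
    (hp : p ∈ closure (torusVar k l L φ)) (hp₂ : ∀ j, p.2 j ≠ 0) (v : L)
    (hv : ∀ i, 0 ≤ (v : (Fin k → ℤ) × (Fin l → ℤ)).1 i) {i : Fin k} (hi : p.1 i = 0) :
    (v : (Fin k → ℤ) × (Fin l → ℤ)).1 i = 0 := by
  set F : (Fin k → ℂ) × (Fin l → ℂ) → ℂ := fun q =>
    (∏ i, q.1 i ^ (v : (Fin k → ℤ) × (Fin l → ℤ)).1 i) *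
      ∏ j, q.2 j ^ (v : (Fin k → ℤ) × (Fin l → ℤ)).2 j
  have hF : ContinuousAt F p :=
    ((continuousAt_prod_zpow fun i => .inr (hv i)).comp continuousAt_fst).mul
      ((continuousAt_prod_zpow fun j => .inl (hp₂ j)).comp continuousAt_snd)
  have hFp : F p = φ v := by
    have hFT : F '' torusVar k l L φ ⊆ {(φ v : ℂ)} := image_subset_iff.mpr fun q hq => hq.2.2 v
    simpa using closure_mono hFT (hF.continuousWithinAt.mem_closure_image hp)
  have hprod : ∏ i, p.1 i ^ (v : (Fin k → ℤ) × (Fin l → ℤ)).1 i ≠ 0 :=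
    left_ne_zero_of_mul (hFp ▸ (φ v).ne_zero)
  by_contra hvi
  exact hprod (prod_eq_zero (mem_univ i) (by rw [hi, zero_zpow _ hvi]))

theorem mem_closure_torusVar_of_dotProduct_eq_zero {p : (Fin k → ℂ) × (Fin l → ℂ)}
    (hp : p ∈ torusVar k l L φ) {n : Fin k → ℤ} (hn : ∀ i, 0 < n i)
    (hperp : ∀ v : L, n ⬝ᵥ (v : (Fin k → ℤ) × (Fin l → ℤ)).1 = 0) :
    ((0, p.2) : (Fin k → ℂ) × (Fin l → ℂ)) ∈ closure (torusVar k l L φ) := by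
  obtain ⟨hp₁, hp₂, hpv⟩ := hp
  set γ : ℂ → (Fin k → ℂ) × (Fin l → ℂ) := fun s => (fun i => s ^ n i * p.1 i, p.2)
  have hγ : ContinuousAt γ 0 :=
    (continuousAt_pi.mpr fun i => (continuousAt_id.zpow₀ (n i) (.inr (hn i).le)).mul
      continuousAt_const).prodMk continuousAt_const
  have hγ0 : γ 0 = (0, p.2) :=
    Prod.ext (funext fun i => by simp [γ, zero_zpow _ (hn i).ne']) rfl
  refine mem_closure_of_tendsto (hγ0 ▸ hγ.tendsto.mono_left nhdsWithin_le_nhds)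
    ((eventually_mem_nhdsWithin (s := {0}ᶜ) (a := 0)).mono fun s (hs : s ≠ 0) => ?_)
  refine ⟨fun i => mul_ne_zero (zpow_ne_zero _ hs) (hp₁ i), hp₂, fun v => ?_⟩
  rw [← hpv v, prod_zpow_mul_zpow hs, hperp v, zpow_zero, one_mul]

end TorusVar

theorem torus_closure_meets_boundary_iff_general
    (k l : ℕ) (L : AddSubgroup ((Fin k → ℤ) × (Fin l → ℤ)))
    (φ : L → ℂˣ)
    (hne : (torusVar k l L φ).Nonempty) :
    (∃ p ∈ closure (torusVar k l L φ), p.1 = 0 ∧ ∀ j, p.2 j ≠ 0) ↔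
      (∀ v : L, (∀ i, 0 ≤ (v : (Fin k → ℤ) × (Fin l → ℤ)).1 i) →
        (v : (Fin k → ℤ) × (Fin l → ℤ)).1 = 0) := by
  constructor
  · rintro ⟨p, hp, hp₁, hp₂⟩ v hv
    funext i
    exact eq_zero_of_mem_closure_torusVar hp hp₂ v hv (congrFun hp₁ i)
  · intro h
    obtain ⟨n, hn, hperp⟩ := (L.map (AddMonoidHom.fst _ _)).exists_pos_dotProduct_eq_zero
      (by rintro _ ⟨v, hv, rfl⟩; exact h ⟨v, hv⟩)
    obtain ⟨p, hp⟩ := hne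
    exact ⟨(0, p.2), mem_closure_torusVar_of_dotProduct_eq_zero hp hn
      (fun v => hperp _ ⟨v, v.2, rfl⟩), rfl, hp.2.1⟩

/-- Torus closure theorem: the closure of `T_{L,φ}` in `ℂᵏ × (ℂ*)ˡ` meets
`Δ = {0} × (ℂ*)ˡ` if and only if `L ∩ C ⊆ N`, i.e. every element of `L` whose
first `k` coordinates are all nonnegative has vanishing first `k` coordinates. -/
theorem torus_closure_meets_boundary_iff
    (k l : ℕ) (L : AddSubgroup ((Fin k → ℤ) × (Fin l → ℤ)))
    (hsat : ∀ (v : (Fin k → ℤ) × (Fin l → ℤ)) (m : ℤ), m ≠ 0 → m • v ∈ L → v ∈ L)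
    (φ : L → ℂˣ) (hφ : ∀ x y : L, φ (x + y) = φ x * φ y)
    (hne : (torusVar k l L φ).Nonempty) :
    (∃ p ∈ closure (torusVar k l L φ), p.1 = 0 ∧ ∀ j, p.2 j ≠ 0) ↔
      (∀ v : L, (∀ i, 0 ≤ (v : (Fin k → ℤ) × (Fin l → ℤ)).1 i) →
        (v : (Fin k → ℤ) × (Fin l → ℤ)).1 = 0) :=
  torus_closure_meets_boundary_iff_general k l L φ hne
end

section
/- In the setting of the torus closure theorem: if L ∩ C ⊆ N, then the intersection of the closure of T_{L,φ} with Δ = {0} × (ℂ*)^ℓ equals Δ_{L,φ}, the subvariety of Δ cut out by the equations λ_{(0,b)}(w) = φ(0,b) for (0,b) ∈ L ∩ N. -/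
open Set

/-- The subvariety `Δ_{L,φ}` of `Δ = {0} × (ℂ*)ˡ` cut out by the equations
`λ_{(0,b)}(w) = φ(0,b)` for `(0,b) ∈ L ∩ N`. -/
def deltaVar (k l : ℕ) (L : AddSubgroup ((Fin k → ℤ) × (Fin l → ℤ)))
    (φ : L → ℂˣ) : Set ((Fin k → ℂ) × (Fin l → ℂ)) :=
  {p | p.1 = 0 ∧ (∀ j, p.2 j ≠ 0) ∧
    ∀ v : L, (v : (Fin k → ℤ) × (Fin l → ℤ)).1 = 0 →
      (∏ j, p.2 j ^ ((v : (Fin k → ℤ) × (Fin l → ℤ)).2 j)) = (φ v : ℂ)}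

open Filter Matrix Topology

/-!
The inclusion `⊆` holds because each monomial `w ↦ w ^ b` with `(0, b) ∈ L` is continuous on
`(ℂ*)ˡ` and equals `φ (0, b)` on `T_{L,φ}`.

For `⊇`, let `(0, w) ∈ Δ_{L,φ}`. The character `(a, b) ↦ φ (a, b) * w ^ (-b)` of `L` is trivial on
`L ∩ N`, so it factors through the projection `M ≤ ℤᵏ` of `L`, and since `ℂˣ` is divisible it
extends to a character `a ↦ z ^ a` of `ℤᵏ`; thus `(z, w) ∈ T_{L,φ}`. As `M` meets `ℕᵏ` only in `0`,
Stiemke's alternative gives `u ∈ ℝᵏ` with positive coordinates orthogonal to `M`, and then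
`(exp (-s u) * z, w) ∈ T_{L,φ}` tends to `(0, w)` as `s → ∞`.

Stiemke's alternative follows from separating `span ℝ M` from the standard simplex. They are
disjoint because a real point of the span with given sign pattern can be approximated by rational
ones with the same pattern: the real kernel of a rational matrix is the closure of its rational
kernel.
-/

theorem LinearMap.exists_comp_comp_eq_self {K V W : Type*} [DivisionRing K] [AddCommGroup V]
    [Module K V] [AddCommGroup W] [Module K W] (f : V →ₗ[K] W) :
    ∃ g : W →ₗ[K] V, f ∘ₗ g ∘ₗ f = f := by
  obtain ⟨π, hπ⟩ := (range f).subtype.exists_leftInverse_of_injective (range f).ker_subtype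
  obtain ⟨h, hh⟩ := f.rangeRestrict.exists_rightInverse_of_surjective f.range_rangeRestrict
  refine ⟨h ∘ₗ π, LinearMap.ext fun v => ?_⟩
  have hπf : π (f v) = f.rangeRestrict v := congr($hπ (f.rangeRestrict v))
  simpa [hπf] using congr((range f).subtype ($hh (f.rangeRestrict v)))

theorem Matrix.exists_mul_mul_eq_self {m n K : Type*} [Fintype m] [Fintype n] [Field K]
    (A : Matrix m n K) : ∃ G : Matrix n m K, A * G * A = A := by
  classical
  obtain ⟨g, hg⟩ := (Matrix.toLin' A).exists_comp_comp_eq_self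
  refine ⟨LinearMap.toMatrix' g, Matrix.toLin'.injective ?_⟩
  simpa [Matrix.toLin'_mul, LinearMap.comp_assoc] using hg

theorem Matrix.mem_closure_image_ratCast_ker {m n : Type*} [Fintype m] [Fintype n]
    (A : Matrix m n ℚ) {c : n → ℝ} (hc : A.map (↑) *ᵥ c = 0) :
    c ∈ closure ((fun d j => (d j : ℝ)) '' {d : n → ℚ | A *ᵥ d = 0}) := by
  classical
  obtain ⟨G, hG⟩ := A.exists_mul_mul_eq_self
  -- `B` maps rational vectors into `ker A` and its real extension fixes the real kernel.
  set B := 1 - G * A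
  have hAB : A * B = 0 := by rw [Matrix.mul_sub, Matrix.mul_one, ← Matrix.mul_assoc, hG, sub_self]
  set f : (n → ℝ) → (n → ℝ) := fun y => B.map (Rat.castHom ℝ) *ᵥ y
  have hfc : f c = c := by
    change (1 - G * A).map (Rat.castHom ℝ) *ᵥ c = c
    rw [Matrix.map_sub _ (map_sub _), Matrix.map_one _ (map_zero _) (map_one _), Matrix.map_mul,
      sub_mulVec, one_mulVec, ← mulVec_mulVec, Rat.coe_castHom, hc, mulVec_zero, sub_zero]
  have hf : Continuous f := continuous_const.matrix_mulVec continuous_id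
  have hdense : DenseRange (fun (d : n → ℚ) j => (d j : ℝ)) :=
    DenseRange.piMap fun _ => Rat.denseRange_cast
  rw [← hfc]
  refine closure_mono ?_ (image_closure_subset_closure_image hf ⟨c, hdense c, rfl⟩)
  rintro _ ⟨_, ⟨d, rfl⟩, rfl⟩
  refine ⟨B *ᵥ d, by simp [mulVec_mulVec, hAB], funext fun j => ?_⟩
  exact RingHom.map_mulVec (Rat.castHom ℝ) B d j

theorem Matrix.exists_rat_mulVec_nonneg_ne_zero {ι n : Type*} [Fintype ι] [Fintype n]
    (P : Matrix ι n ℚ) {c : n → ℝ}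
    (hc : 0 ≤ P.map (↑) *ᵥ c) (hc0 : P.map (↑) *ᵥ c ≠ 0) :
    ∃ d : n → ℚ, 0 ≤ P *ᵥ d ∧ P *ᵥ d ≠ 0 := by
  set x := P.map (↑) *ᵥ c
  -- Rational points of `ker A` near `c` are mapped by `P` to vectors with the sign pattern of `x`.
  let A : Matrix ι n ℚ := of fun i j => if x i = 0 then P i j else 0
  have hA : A.map (↑) *ᵥ c = 0 := by
    funext i
    by_cases hi : x i = 0
    · simp only [A, hi, mulVec, dotProduct, map_apply, of_apply, if_true]
      exact hi
    · simp [A, hi, mulVec, dotProduct]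
  set U := (P.map ((↑) : ℚ → ℝ) *ᵥ ·) ⁻¹' ({i | x i ≠ 0}.pi fun _ => Ioi 0)
  have hU : IsOpen U :=
    (isOpen_set_pi (toFinite _) fun _ _ => isOpen_Ioi).preimage
      (continuous_const.matrix_mulVec continuous_id)
  have hcU : c ∈ U := fun i hi => lt_of_le_of_ne (hc i) (Ne.symm hi)
  obtain ⟨_, hdU, d, hd, rfl⟩ :=
    mem_closure_iff.1 (A.mem_closure_image_ratCast_ker hA) U hU hcU
  have hPd_zero : ∀ i, x i = 0 → (P *ᵥ d) i = 0 := fun i hi => by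
    simpa [A, hi, mulVec, dotProduct] using congr_fun hd i
  have hPd_pos : ∀ i, x i ≠ 0 → 0 < (P *ᵥ d) i := fun i hi => by
    have := hdU i hi
    change 0 < (P.map (Rat.castHom ℝ) *ᵥ (Rat.castHom ℝ ∘ d)) i at this
    rw [← RingHom.map_mulVec, Rat.coe_castHom] at this
    exact_mod_cast this
  obtain ⟨i₀, hi₀⟩ := Function.ne_iff.1 hc0
  refine ⟨d, fun i => ?_, Function.ne_iff.2 ⟨i₀, (hPd_pos i₀ hi₀).ne'⟩⟩
  by_cases hi : x i = 0
  exacts [(hPd_zero i hi).ge, (hPd_pos i hi).le]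

theorem Rat.exists_nat_mul_eq_intCast {n : Type*} [Fintype n] (d : n → ℚ) :
    ∃ N : ℕ, 0 < N ∧ ∃ e : n → ℤ, ∀ j, (e j : ℚ) = N * d j := by
  refine ⟨∏ j, (d j).den, Finset.prod_pos fun j _ => (d j).den_pos, ?_⟩
  choose t ht using fun j => Finset.dvd_prod_of_mem (fun j => (d j).den) (Finset.mem_univ j)
  refine ⟨fun j => (d j).num * t j, fun j => ?_⟩
  rw [ht j]
  push_cast
  linear_combination -(t j : ℚ) * Rat.mul_den_eq_num (d j)

theorem Matrix.exists_int_mulVec_nonneg_ne_zero {ι n : Type*} [Fintype ι] [Fintype n]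
    (P : Matrix ι n ℤ) {c : n → ℝ}
    (hc : 0 ≤ P.map (↑) *ᵥ c) (hc0 : P.map (↑) *ᵥ c ≠ 0) :
    ∃ e : n → ℤ, 0 ≤ P *ᵥ e ∧ P *ᵥ e ≠ 0 := by
  have hmap : (P.map ((↑) : ℤ → ℚ)).map ((↑) : ℚ → ℝ) = P.map (↑) := by
    ext; simp
  obtain ⟨d, hd, hd0⟩ := (P.map ((↑) : ℤ → ℚ)).exists_rat_mulVec_nonneg_ne_zero
    (c := c) (hmap ▸ hc) (hmap ▸ hc0)
  obtain ⟨N, hN, e, he⟩ := Rat.exists_nat_mul_eq_intCast d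
  have he' : Int.castRingHom ℚ ∘ e = (N : ℚ) • d := funext fun j => by simp [he]
  have hPe : ∀ i, ((P *ᵥ e) i : ℚ) = N * (P.map (↑) *ᵥ d) i := by
    intro i
    have := RingHom.map_mulVec (Int.castRingHom ℚ) P e i
    rwa [he', mulVec_smul] at this
  refine ⟨e, fun i => ?_, fun h => hd0 (funext fun i => ?_)⟩
  · have : (0 : ℚ) ≤ (P *ᵥ e) i := (hPe i).symm ▸ mul_nonneg (Nat.cast_nonneg N) (hd i)
    exact_mod_cast this
  · simpa [h, hN.ne'] using (hPe i).symm

theorem AddSubgroup.disjoint_span_intCast_stdSimplex {ι : Type*} [Fintype ι]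
    (M : AddSubgroup (ι → ℤ)) (hM : ∀ a ∈ M, 0 ≤ a → a = 0) :
    Disjoint (Submodule.span ℝ ((fun (a : ι → ℤ) i => (a i : ℝ)) '' M) : Set (ι → ℝ))
      (stdSimplex ℝ ι) := by
  rw [Set.disjoint_left]
  rintro x hxV hxΔ
  obtain ⟨r, c, g, rfl⟩ := Submodule.mem_span_set'.1 hxV
  choose a haM ha using fun j => (g j).2
  set P : Matrix ι (Fin r) ℤ := of fun i j => a j i
  have hPc : P.map (↑) *ᵥ c = ∑ j, c j • ((g j : ι → ℝ)) := by
    ext i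
    simp [P, mulVec, dotProduct, ← ha, Finset.sum_apply, mul_comm]
  have hPe : ∀ e, P *ᵥ e ∈ M := fun e => by
    have : P *ᵥ e = ∑ j, e j • a j := by
      ext i; simp [P, mulVec, dotProduct, Finset.sum_apply, mul_comm]
    exact this ▸ AddSubgroup.sum_mem _ fun j _ => AddSubgroup.zsmul_mem _ (haM j) _
  have hx0 : ∑ j, c j • (g j : ι → ℝ) ≠ 0 := by
    intro h
    have hsum := hxΔ.2
    rw [h] at hsum
    simp at hsum
  rw [← hPc] at hxΔ hx0
  obtain ⟨e, he, he0⟩ := P.exists_int_mulVec_nonneg_ne_zero hxΔ.1 hx0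
  exact he0 (hM _ (hPe e) he)

theorem AddSubgroup.exists_pos_orthogonal {ι : Type*} [Fintype ι] (M : AddSubgroup (ι → ℤ))
    (hM : ∀ a ∈ M, 0 ≤ a → a = 0) :
    ∃ u : ι → ℝ, (∀ i, 0 < u i) ∧ ∀ a ∈ M, ∑ i, u i * a i = 0 := by
  classical
  set V := Submodule.span ℝ ((fun (a : ι → ℤ) i => (a i : ℝ)) '' M)
  obtain ⟨f, s, t, hfV, hst, hft⟩ := geometric_hahn_banach_closed_compact V.convex
    V.closed_of_finiteDimensional (convex_stdSimplex ℝ ι) (isCompact_stdSimplex ℝ ι)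
    (M.disjoint_span_intCast_stdSimplex hM)
  have hf0 : ∀ y ∈ V, f y = 0 := by
    intro y hy
    by_contra h
    have := hfV ((s / f y) • y) (V.smul_mem _ hy)
    rw [map_smul, smul_eq_mul, div_mul_cancel₀ _ h] at this
    exact lt_irrefl _ this
  refine ⟨fun i => f (fun j => if i = j then 1 else 0), fun i => ?_, fun a ha => ?_⟩
  · have hs : 0 < s := by simpa using hfV 0 V.zero_mem
    exact hs.trans (hst.trans (hft _ (ite_eq_mem_stdSimplex ℝ i)))
  · refine Eq.trans ?_ (hf0 _ (Submodule.subset_span ⟨a, ha, rfl⟩))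
    rw [← ContinuousLinearMap.coe_coe, LinearMap.pi_apply_eq_sum_univ]
    simp [mul_comm]

theorem Complex.units_zpow_surjective {n : ℤ} (hn : n ≠ 0) :
    Function.Surjective fun z : ℂˣ => z ^ n := by
  intro z
  refine ⟨Units.mk0 (exp (log z / n)) (exp_ne_zero _), Units.ext ?_⟩
  rw [Units.val_zpow_eq_zpow_val, Units.val_mk0, ← exp_int_mul,
    mul_div_cancel₀ _ (Int.cast_ne_zero.2 hn), exp_log z.ne_zero]

theorem Complex.baer_additive_units : Module.Baer ℤ (Additive ℂˣ) :=
  letI := divisibleByOfSMulRightSurj (Additive ℂˣ) ℤ fun {n} hn a =>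
    let ⟨b, hb⟩ := units_zpow_surjective hn a.toMul
    ⟨.ofMul b, (ofMul_zpow n b).symm.trans (congr_arg Additive.ofMul hb)⟩
  Module.Baer.of_divisible _

theorem AddSubgroup.exists_addMonoidHom_fst_eq {A B D : Type*} [AddCommGroup A] [AddCommGroup B]
    [AddCommGroup D] (hD : Module.Baer ℤ D) {L : AddSubgroup (A × B)} (χ : L →+ D)
    (hχ : ∀ v : L, (v : A × B).1 = 0 → χ v = 0) :
    ∃ g : A →+ D, ∀ v : L, χ v = g (v : A × B).1 := by
  let f : L →+ A := (AddMonoidHom.fst A B).comp L.subtype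
  have hker : f.rangeRestrict.ker ≤ χ.ker := by
    rw [f.ker_rangeRestrict]
    exact hχ
  obtain ⟨g, hg⟩ := hD.extension_property_addMonoidHom f.range.subtype Subtype.val_injective
    (f.rangeRestrict.liftOfSurjective f.rangeRestrict_surjective ⟨χ, hker⟩)
  refine ⟨g, fun v => ?_⟩
  have := DFunLike.congr_fun hg (f.rangeRestrict v)
  simp only [AddMonoidHom.comp_apply, AddMonoidHom.liftOfRightInverse_comp_apply] at this
  exact this.symm

theorem AddMonoidHom.toMul_apply_eq_prod_zpow {ι G : Type*} [Fintype ι] [DecidableEq ι]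
    [CommGroup G] (g : (ι → ℤ) →+ Additive G) (a : ι → ℤ) :
    (g a).toMul = ∏ i, (g (Pi.single i 1)).toMul ^ a i := by
  conv_lhs => rw [pi_eq_sum_univ' a]
  simp only [map_sum, map_zsmul, toMul_sum, toMul_zsmul]

theorem prod_ofReal_exp_neg_mul_zpow_eq_one {ι : Type*} [Fintype ι] {u : ι → ℝ} {a : ι → ℤ}
    (h : ∑ i, u i * a i = 0) (s : ℝ) : ∏ i, (Real.exp (-(s * u i)) : ℂ) ^ a i = 1 := by
  simp only [Complex.ofReal_exp, ← Complex.exp_int_mul, ← Complex.exp_sum]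
  rw [← Complex.exp_zero]
  congr 1
  calc _ = -s * ((∑ i, u i * a i : ℝ) : ℂ) := by
        push_cast
        rw [Finset.mul_sum]
        exact Finset.sum_congr rfl fun i _ => by ring
    _ = 0 := by rw [h, Complex.ofReal_zero, mul_zero]

section

variable {k l : ℕ} {L : AddSubgroup ((Fin k → ℤ) × (Fin l → ℤ))} {φ : L → ℂˣ}

theorem mem_deltaVar_of_mem_closure_torusVar {p : (Fin k → ℂ) × (Fin l → ℂ)}
    (hp : p ∈ closure (torusVar k l L φ)) (hp1 : p.1 = 0) (hp2 : ∀ j, p.2 j ≠ 0) :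
    p ∈ deltaVar k l L φ := by
  refine ⟨hp1, hp2, fun v hv => ?_⟩
  let f := fun q : (Fin k → ℂ) × (Fin l → ℂ) => ∏ j, q.2 j ^ (v : (Fin k → ℤ) × (Fin l → ℤ)).2 j
  have hf : ContinuousAt f p := tendsto_finsetProd _ fun j _ =>
    ((continuous_apply j).comp continuous_snd).continuousAt.zpow₀ _ (Or.inl (hp2 j))
  have hfT : f '' torusVar k l L φ ⊆ {(φ v : ℂ)} := by
    rintro _ ⟨q, hq, rfl⟩
    simpa [hv] using hq.2.2 v
  exact closure_minimal hfT isClosed_singleton (hf.continuousWithinAt.mem_closure_image hp)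

theorem exists_mem_torusVar_of_mem_deltaVar (hφ : ∀ x y : L, φ (x + y) = φ x * φ y)
    {p : (Fin k → ℂ) × (Fin l → ℂ)} (hp : p ∈ deltaVar k l L φ) :
    ∃ z : Fin k → ℂ, (z, p.2) ∈ torusVar k l L φ := by
  obtain ⟨-, hw0, hw⟩ := hp
  set w : Fin l → ℂˣ := fun j => Units.mk0 (p.2 j) (hw0 j)
  let χ : L →+ Additive ℂˣ := AddMonoidHom.mk'
    (fun v => .ofMul (φ v * (∏ j, w j ^ (v : (Fin k → ℤ) × (Fin l → ℤ)).2 j)⁻¹)) fun x y => by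
      simp only [AddSubgroup.coe_add, Prod.snd_add, Pi.add_apply, _root_.zpow_add,
        Finset.prod_mul_distrib, hφ, mul_inv, ← ofMul_mul, mul_mul_mul_comm]
  have hχ : ∀ v : L, (v : (Fin k → ℤ) × (Fin l → ℤ)).1 = 0 → χ v = 0 := fun v hv => by
    have : φ v = ∏ j, w j ^ (v : (Fin k → ℤ) × (Fin l → ℤ)).2 j := Units.ext <| by
      push_cast [w]
      exact (hw v hv).symm
    simp [χ, this]
  obtain ⟨g, hg⟩ := AddSubgroup.exists_addMonoidHom_fst_eq Complex.baer_additive_units χ hχ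
  refine ⟨fun i => ((g (Pi.single i 1)).toMul : ℂ), fun i => Units.ne_zero _, hw0, fun v => ?_⟩
  have := congr_arg Additive.toMul (hg v)
  rw [g.toMul_apply_eq_prod_zpow] at this
  simp only [χ, AddMonoidHom.mk'_apply, toMul_ofMul] at this
  rw [mul_inv_eq_iff_eq_mul] at this
  rw [this]
  push_cast [w]
  rfl

theorem mul_fst_mem_torusVar {τ : Fin k → ℂ} (hτ0 : ∀ i, τ i ≠ 0)
    (hτ : ∀ v : L, ∏ i, τ i ^ (v : (Fin k → ℤ) × (Fin l → ℤ)).1 i = 1)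
    {q : (Fin k → ℂ) × (Fin l → ℂ)} (hq : q ∈ torusVar k l L φ) :
    (τ * q.1, q.2) ∈ torusVar k l L φ := by
  obtain ⟨hq1, hq2, hqv⟩ := hq
  refine ⟨fun i => mul_ne_zero (hτ0 i) (hq1 i), hq2, fun v => ?_⟩
  simp only [Pi.mul_apply, mul_zpow, Finset.prod_mul_distrib, hτ, one_mul, hqv]

theorem deltaVar_subset_closure_torusVar (hφ : ∀ x y : L, φ (x + y) = φ x * φ y)
    (hLC : ∀ v : L, (∀ i, 0 ≤ (v : (Fin k → ℤ) × (Fin l → ℤ)).1 i) →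
      (v : (Fin k → ℤ) × (Fin l → ℤ)).1 = 0) :
    deltaVar k l L φ ⊆ closure (torusVar k l L φ) := by
  intro p hp
  obtain ⟨z, hz⟩ := exists_mem_torusVar_of_mem_deltaVar hφ hp
  obtain ⟨u, hu0, hu⟩ := (L.map (AddMonoidHom.fst _ _)).exists_pos_orthogonal <| by
    rintro _ ⟨v, hv, rfl⟩ h
    exact hLC ⟨v, hv⟩ h
  let τ : ℝ → Fin k → ℂ := fun s i => (Real.exp (-(s * u i)) : ℂ)
  have hτ_lim : Tendsto τ atTop (𝓝 0) := tendsto_pi_nhds.2 fun i => by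
    simpa [τ, Function.comp_def] using (Complex.continuous_ofReal.tendsto 0).comp
      (Real.tendsto_exp_neg_atTop_nhds_zero.comp (tendsto_id.atTop_mul_const (hu0 i)))
  have hlim : Tendsto (fun s => (τ s * z, p.2)) atTop (𝓝 p) := by
    rw [← Prod.mk.eta (p := p), hp.1]
    simpa using (hτ_lim.mul_const z).prodMk_nhds tendsto_const_nhds
  refine mem_closure_of_tendsto hlim (.of_forall fun s => mul_fst_mem_torusVar
    (fun i => Complex.ofReal_ne_zero.2 (Real.exp_pos _).ne') (fun v => ?_) hz)
  exact prod_ofReal_exp_neg_mul_zpow_eq_one (hu _ ⟨v, v.2, rfl⟩) s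

end

theorem torus_closure_inter_boundary_eq_general
    (k l : ℕ) (L : AddSubgroup ((Fin k → ℤ) × (Fin l → ℤ)))
    (φ : L → ℂˣ) (hφ : ∀ x y : L, φ (x + y) = φ x * φ y)
    (hLC : ∀ v : L, (∀ i, 0 ≤ (v : (Fin k → ℤ) × (Fin l → ℤ)).1 i) →
      (v : (Fin k → ℤ) × (Fin l → ℤ)).1 = 0) :
    {p ∈ closure (torusVar k l L φ) | p.1 = 0 ∧ ∀ j, p.2 j ≠ 0}
      = deltaVar k l L φ := by
  ext p
  constructor
  · rintro ⟨hp, hp1, hp2⟩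
    exact mem_deltaVar_of_mem_closure_torusVar hp hp1 hp2
  · intro hp
    exact ⟨deltaVar_subset_closure_torusVar hφ hLC hp, hp.1, hp.2.1⟩

/-- If `L ∩ C ⊆ N`, the intersection of the closure of `T_{L,φ}` with
`Δ = {0} × (ℂ*)ˡ` is exactly `Δ_{L,φ}`. -/
theorem torus_closure_inter_boundary_eq
    (k l : ℕ) (L : AddSubgroup ((Fin k → ℤ) × (Fin l → ℤ)))
    (hsat : ∀ (v : (Fin k → ℤ) × (Fin l → ℤ)) (m : ℤ), m ≠ 0 → m • v ∈ L → v ∈ L)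
    (φ : L → ℂˣ) (hφ : ∀ x y : L, φ (x + y) = φ x * φ y)
    (hne : (torusVar k l L φ).Nonempty)
    (hLC : ∀ v : L, (∀ i, 0 ≤ (v : (Fin k → ℤ) × (Fin l → ℤ)).1 i) →
      (v : (Fin k → ℤ) × (Fin l → ℤ)).1 = 0) :
    {p ∈ closure (torusVar k l L φ) | p.1 = 0 ∧ ∀ j, p.2 j ≠ 0}
      = deltaVar k l L φ :=
  torus_closure_inter_boundary_eq_general k l L φ hφ hLC
end

section
/- The expression R(x) = R_1(x)^{a_1} R_3(x)^{±1}, where on the line x_1 + x_2 + x_3 = 0 (normalized x_1 = 1, x_3 = −1 − x_2) the cross-ratios become rational functions of x_2, is not a constant function of x_2; concretely: the rational function in the single variable x_2 obtained by substituting x_1 = 1, x_3 = −1−x_2 into R_1^{a_1}R_2^{a_2}R_3^{a_3} with a_1 ≠ 0 is non-constant, because the linear factor (2x_2+1) appears in the denominator of R_1 and nowhere else. -/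
/-!
Since `ζ² + ζ + 1 = 0`, every cross-ratio of the form `[u, ζu, ζv, v]` simplifies to
`(u² + uv + v²) / (u - v)²`. On the line `x₁ = 1, x₂ = x, x₃ = -1 - x` the three cross-ratios
therefore share the numerator `x² + x + 1` and have denominators `(2x + 1)²`, `(x + 2)²` and
`(1 - x)²`. At `x = -1/2` the numerator does not vanish, so `R₁` has a double pole there while
`R₂` and `R₃` are holomorphic and nonzero. The product `R₁^a₁ R₂^a₂ R₃^a₃` thus has order
`-2a₁ ≠ 0` at `-1/2`, whereas the domain of definition contains a punctured neighbourhood of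
`-1/2`, and a function that is constant there has order `0` or `⊤`.
-/

open Complex

/-- The cross-ratio `[z₁,z₂,z₃,z₄] = (z₁−z₃)(z₂−z₄)/((z₁−z₄)(z₂−z₃))`. -/
noncomputable def crossRatio (z1 z2 z3 z4 : ℂ) : ℂ :=
  ((z1 - z3) * (z2 - z4)) / ((z1 - z4) * (z2 - z3))

open Filter Topology

theorem crossRatio_ne_zero_iff {z₁ z₂ z₃ z₄ : ℂ} :
    crossRatio z₁ z₂ z₃ z₄ ≠ 0 ↔ (z₁ - z₃) * (z₂ - z₄) ≠ 0 ∧ (z₁ - z₄) * (z₂ - z₃) ≠ 0 :=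
  div_ne_zero_iff

@[fun_prop]
theorem MeromorphicAt.crossRatio {f₁ f₂ f₃ f₄ : ℂ → ℂ} {a : ℂ} (h₁ : MeromorphicAt f₁ a)
    (h₂ : MeromorphicAt f₂ a) (h₃ : MeromorphicAt f₃ a) (h₄ : MeromorphicAt f₄ a) :
    MeromorphicAt (fun x ↦ crossRatio (f₁ x) (f₂ x) (f₃ x) (f₄ x)) a := by
  unfold _root_.crossRatio
  fun_prop

theorem meromorphicOrderAt_eq_zero_or_top_of_eventuallyEq_const {𝕜 E : Type*}
    [NontriviallyNormedField 𝕜] [NormedAddCommGroup E] [NormedSpace 𝕜 E] {f : 𝕜 → E} {x : 𝕜}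
    {c : E} (h : f =ᶠ[𝓝[≠] x] fun _ ↦ c) :
    meromorphicOrderAt f x = 0 ∨ meromorphicOrderAt f x = ⊤ := by
  classical
  rw [meromorphicOrderAt_congr h, meromorphicOrderAt_const]
  split_ifs <;> simp

namespace IsPrimitiveRoot

variable {ζ : ℂ} (hζ : IsPrimitiveRoot ζ 3)
include hζ

theorem crossRatio_mul_mul (u v : ℂ) :
    crossRatio u (ζ * u) (ζ * v) v = (u ^ 2 + u * v + v ^ 2) / (u - v) ^ 2 := by
  have hζ₃ : 1 + ζ + ζ ^ 2 = 0 := by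
    simpa [Finset.sum_range_succ] using hζ.geom_sum_eq_zero (by norm_num)
  calc crossRatio u (ζ * u) (ζ * v) v
      = (ζ * (u ^ 2 + u * v + v ^ 2)) / (ζ * (u - v) ^ 2) := by
        unfold crossRatio
        congr 1
        · linear_combination (-(u * v)) * hζ₃
        · ring
    _ = _ := mul_div_mul_left _ _ (hζ.ne_zero (by norm_num))

theorem meromorphicOrderAt_crossRatio_mul_mul_eq_zero {u v : ℂ → ℂ} {a : ℂ}
    (hu : AnalyticAt ℂ u a) (hv : AnalyticAt ℂ v a) (huv : u a ≠ v a)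
    (hnum : u a ^ 2 + u a * v a + v a ^ 2 ≠ 0) :
    meromorphicOrderAt (fun x ↦ crossRatio (u x) (ζ * u x) (ζ * v x) (v x)) a = 0 := by
  have hden : (u a - v a) ^ 2 ≠ 0 := pow_ne_zero 2 (sub_ne_zero.2 huv)
  simp only [hζ.crossRatio_mul_mul]
  refine (AnalyticAt.meromorphicNFAt ?_).meromorphicOrderAt_eq_zero_iff.2 (div_ne_zero hnum hden)
  exact (by fun_prop : AnalyticAt ℂ _ a).div (by fun_prop) hden

theorem meromorphicOrderAt_crossRatios_line :
    meromorphicOrderAt (fun x ↦ crossRatio x (ζ * x) (ζ * (-1 - x)) (-1 - x)) (-1 / 2) = -2 ∧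
    meromorphicOrderAt (fun x ↦ crossRatio (-1 - x) (ζ * (-1 - x)) (ζ * 1) 1) (-1 / 2) = 0 ∧
    meromorphicOrderAt (fun x ↦ crossRatio 1 (ζ * 1) (ζ * x) x) (-1 / 2) = 0 := by
  refine ⟨?_, hζ.meromorphicOrderAt_crossRatio_mul_mul_eq_zero (u := fun x ↦ -1 - x)
    (v := fun _ ↦ 1) (by fun_prop) (by fun_prop) (by norm_num) (by norm_num),
    hζ.meromorphicOrderAt_crossRatio_mul_mul_eq_zero (u := fun _ ↦ 1) (v := id)
    (by fun_prop) (by fun_prop) (by norm_num) (by norm_num)⟩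
  simp only [hζ.crossRatio_mul_mul]
  rw [show (-2 : WithTop ℤ) = ((-2 : ℤ) : WithTop ℤ) from rfl,
    meromorphicOrderAt_eq_int_iff (by fun_prop)]
  refine ⟨fun x ↦ (x ^ 2 + x + 1) / 4, by fun_prop, by norm_num, ?_⟩
  filter_upwards [self_mem_nhdsWithin] with x (hx : x ≠ -1 / 2)
  have hx' : x + 1 / 2 ≠ 0 := fun h ↦ hx (by linear_combination h)
  rw [smul_eq_mul, zpow_neg, zpow_two]
  field_simp
  ring

theorem eventually_crossRatios_line_ne_zero :
    ∀ᶠ x in 𝓝[≠] (-1 / 2 : ℂ), crossRatio x (ζ * x) (ζ * (-1 - x)) (-1 - x) ≠ 0 ∧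
      crossRatio (-1 - x) (ζ * (-1 - x)) (ζ * 1) 1 ≠ 0 ∧ crossRatio 1 (ζ * 1) (ζ * x) x ≠ 0 := by
  obtain ⟨h₁, h₂, h₃⟩ := hζ.meromorphicOrderAt_crossRatios_line
  refine .and ?_ (.and ?_ ?_) <;>
    refine (meromorphicOrderAt_ne_top_iff_eventually_ne_zero (by fun_prop)).1 ?_ <;>
    simp only [h₁, h₂, h₃] <;> decide

theorem meromorphicOrderAt_crossRatios_line_zpow (a₁ a₂ a₃ : ℤ) :
    meromorphicOrderAt (fun x ↦ crossRatio x (ζ * x) (ζ * (-1 - x)) (-1 - x) ^ a₁ *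
      crossRatio (-1 - x) (ζ * (-1 - x)) (ζ * 1) 1 ^ a₂ * crossRatio 1 (ζ * 1) (ζ * x) x ^ a₃)
      (-1 / 2) = ((-2 * a₁ : ℤ) : WithTop ℤ) := by
  obtain ⟨h₁, h₂, h₃⟩ := hζ.meromorphicOrderAt_crossRatios_line
  rw [fun_meromorphicOrderAt_mul (by fun_prop) (by fun_prop),
    fun_meromorphicOrderAt_mul (by fun_prop) (by fun_prop),
    fun_meromorphicOrderAt_zpow (by fun_prop), fun_meromorphicOrderAt_zpow (by fun_prop),
    fun_meromorphicOrderAt_zpow (by fun_prop), h₁, h₂, h₃]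
  rw [mul_zero, mul_zero, add_zero, add_zero, mul_comm]
  rfl

end IsPrimitiveRoot

/-- With `ζ = e^{2πi/3}`, `x₁ = 1`, `x₂ = x`, `x₃ = −1−x`, `yᵢ = ζxᵢ`, the
rational function `R₁^{a₁}R₂^{a₂}R₃^{a₃}` of the variable `x` (with `a₁ ≠ 0`)
is not constant on its domain of definition. -/
theorem crossRatio_product_not_constant_on_line
    (ζ : ℂ) (hζ : ζ = Complex.exp (2 * Real.pi * Complex.I / 3))
    (R₁ R₂ R₃ : ℂ → ℂ)
    (hR₁ : ∀ x, R₁ x = crossRatio x (ζ * x) (ζ * (-1 - x)) (-1 - x))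
    (hR₂ : ∀ x, R₂ x = crossRatio (-1 - x) (ζ * (-1 - x)) (ζ * 1) 1)
    (hR₃ : ∀ x, R₃ x = crossRatio 1 (ζ * 1) (ζ * x) x)
    (D : ℂ → Prop)
    (hD : ∀ x, D x ↔
      ((x - (-1 - x)) * (ζ * x - ζ * (-1 - x)) ≠ 0 ∧
       ((-1 - x) - 1) * (ζ * (-1 - x) - ζ * 1) ≠ 0 ∧
       (1 - x) * (ζ * 1 - ζ * x) ≠ 0 ∧
       R₁ x ≠ 0 ∧ R₂ x ≠ 0 ∧ R₃ x ≠ 0))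
    (a₁ a₂ a₃ : ℤ) (ha₁ : a₁ ≠ 0) :
    ¬ ∃ c : ℂ, ∀ x : ℂ, D x → (R₁ x) ^ a₁ * (R₂ x) ^ a₂ * (R₃ x) ^ a₃ = c := by
  rintro ⟨c, hc⟩
  have hζ₃ : IsPrimitiveRoot ζ 3 := hζ ▸ by exact_mod_cast isPrimitiveRoot_exp 3 (by norm_num)
  obtain rfl : R₁ = _ := funext hR₁
  obtain rfl : R₂ = _ := funext hR₂
  obtain rfl : R₃ = _ := funext hR₃
  have hD' : ∀ᶠ x in 𝓝[≠] (-1 / 2), D x := by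
    filter_upwards [hζ₃.eventually_crossRatios_line_ne_zero] with x ⟨h₁, h₂, h₃⟩
    exact (hD x).2 ⟨(crossRatio_ne_zero_iff.1 h₁).2, (crossRatio_ne_zero_iff.1 h₂).2,
      (crossRatio_ne_zero_iff.1 h₃).2, h₁, h₂, h₃⟩
  rcases meromorphicOrderAt_eq_zero_or_top_of_eventuallyEq_const (hD'.mono hc) with h | h <;>
    rw [hζ₃.meromorphicOrderAt_crossRatios_line_zpow] at h
  · exact ha₁ (by simpa using h)
  · exact WithTop.coe_ne_top h
end

section
/- Let F be a real quadratic or cubic (or any) number field of degree g, K its Galois closure, σ an element of Gal(K/ℚ), and define Q_σ : F → K by Q_σ(t) = t·σ^{-1}(t). With ε_σ = Σ_i r_i ⊗ σ(s_i) as above and the induced pairing ⟨x_1⊗x_2, y_1⊗y_2⟩ = Tr(x_1y_1)Tr(x_2y_2) on K⊗K, one has for all x ∈ K fixed by the group G_σ (with fixed field K_σ) and all t ∈ F: ⟨x·ε_σ, t⊗t⟩ = [K:K_σ]·Tr^{K_σ}_ℚ(x·Q_σ(t)). -/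
/-!
Expanding `x t` in the basis `(sᵢ)` trace-dual to `(bᵢ)` turns the left side into
`Tr(σ(x t) · t)`; by `σ`-invariance of the trace this is `Tr(x · t σ⁻¹(t)) = Tr(x Q_σ(t))`,
and since `x Q_σ(t)` lies in `K_σ`, the trace tower `Tr^K_ℚ = Tr^{K_σ}_ℚ ∘ Tr^K_{K_σ}` gives the
factor `[K : K_σ]`.
-/

open Module Algebra

theorem Algebra.trace_algebraMap_tower (A B C : Type*) [Field A] [Field B] [Field C]
    [Algebra A B] [Algebra B C] [Algebra A C] [IsScalarTower A B C] [FiniteDimensional A C]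
    (y : B) :
    trace A C (algebraMap B C y) = finrank B C • trace A B y := by
  have : FiniteDimensional A B := .left A B C
  have : FiniteDimensional B C := .right A B C
  rw [← trace_trace (S := B), trace_algebraMap, map_nsmul]

section TraceDual

variable {K L ι : Type*} [Field K] [Field L] [Algebra K L] [FiniteDimensional K L]
  [Algebra.IsSeparable K L] [Fintype ι] [DecidableEq ι]

theorem Module.Basis.traceDual_eq_of_trace_mul {b : Basis ι K L} {s : ι → L}
    (hdual : ∀ i j, trace K L (b i * s j) = if i = j then 1 else 0) :
    b.traceDual = s :=
  Basis.traceDual_eq_iff.mpr fun i j => by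
    rw [traceForm_apply, mul_comm, hdual]

theorem Module.Basis.sum_trace_mul_apply_traceDual {M : Type*} [AddCommGroup M] [Module K M]
    (b : Basis ι K L) (f : L →ₗ[K] M) (y : L) :
    ∑ i, trace K L (y * b i) • f (b.traceDual i) = f y := by
  conv_rhs => rw [← b.traceDual.sum_repr y]
  simp [map_sum]

end TraceDual

theorem epsilon_sigma_pairing_formula_general
    (K : Type*) [Field K] [Algebra ℚ K] [FiniteDimensional ℚ K]
    (g : ℕ)
    (b : Basis (Fin g) ℚ K) (s : Fin g → K)
    (hdual : ∀ i j, Algebra.trace ℚ K (b i * s j) = if i = j then 1 else 0)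
    (σ : K ≃ₐ[ℚ] K)
    (E : IntermediateField ℚ K)
    (t : K)
    (x : E) (q : E) (hq : (q : K) = t * σ.symm t) :
    ∑ i, (Algebra.trace ℚ K ((x : K) * b i * t)) *
        (Algebra.trace ℚ K (σ (s i) * t))
      = (Module.finrank E K : ℚ) * Algebra.trace ℚ E (x * q) := by
  let pairWithT : K →ₗ[ℚ] ℚ := trace ℚ K ∘ₗ LinearMap.mulRight ℚ t ∘ₗ σ.toLinearMap
  have expand : ∑ i, trace ℚ K ((x : K) * b i * t) * trace ℚ K (σ (s i) * t)
      = trace ℚ K (σ ((x : K) * t) * t) := by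
    have h := b.sum_trace_mul_apply_traceDual pairWithT ((x : K) * t)
    rw [b.traceDual_eq_of_trace_mul hdual] at h
    simpa only [pairWithT, mul_right_comm _ (b _) t, smul_eq_mul, LinearMap.comp_apply,
      LinearMap.mulRight_apply, AlgEquiv.toLinearMap_apply] using h
  have untwist : trace ℚ K (σ ((x : K) * t) * t) = trace ℚ K (algebraMap E K (x * q)) := by
    rw [← trace_eq_of_algEquiv σ.symm, map_mul σ.symm, AlgEquiv.symm_apply_apply,
      IntermediateField.algebraMap_apply, IntermediateField.coe_mul, hq, mul_assoc]
  rw [expand, untwist, trace_algebraMap_tower ℚ E K, nsmul_eq_mul]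

/-- Pairing formula for `ε_σ`: with trace-dual bases `(rᵢ), (sᵢ)` of a Galois
number field `K`, `σ ∈ Gal(K/ℚ)`, a subfield `F ∋ t`, and a subfield `K_σ = E`
containing `x` and `Q_σ(t) = t·σ⁻¹(t)`, one has
`⟨x·ε_σ, t ⊗ t⟩ = [K:K_σ]·Tr^{K_σ}_ℚ(x·Q_σ(t))`, where the left side is
`Σᵢ Tr(x rᵢ t)·Tr(σ(sᵢ) t)`. -/
theorem epsilon_sigma_pairing_formula
    (K : Type*) [Field K] [Algebra ℚ K] [FiniteDimensional ℚ K] [IsGalois ℚ K]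
    (g : ℕ) (hdeg : Module.finrank ℚ K = g)
    (b : Basis (Fin g) ℚ K) (s : Fin g → K)
    (hdual : ∀ i j, Algebra.trace ℚ K (b i * s j) = if i = j then 1 else 0)
    (σ : K ≃ₐ[ℚ] K)
    (F E : IntermediateField ℚ K)
    (t : K) (ht : t ∈ F)
    (x : E) (q : E) (hq : (q : K) = t * σ.symm t) :
    ∑ i, (Algebra.trace ℚ K ((x : K) * b i * t)) *
        (Algebra.trace ℚ K (σ (s i) * t))
      = (Module.finrank E K : ℚ) * Algebra.trace ℚ E (x * q) :=
  epsilon_sigma_pairing_formula_general K g b s hdual σ E t x q hq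
end
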